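/- arXiv:2507.07022 — 2 statements merged into one kernel-verified Lean document; each statement's English description precedes it below -/
import Mathlib

section
/- Suppose that j_i <= t_1 + ... + t_i for all i = 1,...,d-1. Then for every associated prime P of S/B_t(u), exactly one of the variables x_{j_1},...,x_{j_d} belongs to P; consequently u belongs to P but not to P^2, for every associated prime P of S/B_t(u). -/
open Finset MvPolynomial

/-! Common definitions for principal vector-spread Borel ideals
(Crupi–Ficarra–Lax, "Principal vector-spread Borel ideals").

Throughout, `S = K[x_1,…,x_n]` is realized as `MvPolynomial (Fin n) K`, and the
variable `x_p` (1-based position `p ∈ [1,n]`) is `X (p-1)`. -/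

/-- The variable `x_p` of `K[x_1,…,x_n]`, for a 1-based position `p ∈ [1,n]`. -/
noncomputable def xv (K : Type*) [Field K] (n : ℕ) [NeZero n] (p : ℕ) :
    MvPolynomial (Fin n) K := MvPolynomial.X (Fin.ofNat n (p - 1 : ℕ))

/-- The squarefree monomial `x_{i 1} ⋯ x_{i e}` determined by the index function `i`. -/
noncomputable def monOf (K : Type*) [Field K] (n : ℕ) [NeZero n] (e : ℕ) (i : ℕ → ℕ) :
    MvPolynomial (Fin n) K := ∏ r ∈ Finset.Icc 1 e, xv K n (i r)

/-- Index functions of the `t`-spread monomials `x_{i 1} ⋯ x_{i e}` with `i r ≤ J r` for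
all `r = 1,…,e`.  (These monomials form the minimal monomial generating set of the
principal `t`-spread Borel ideal `B_t(x_{J 1} ⋯ x_{J e})`.) -/
def spreadIdx (e : ℕ) (t J : ℕ → ℕ) : Set (ℕ → ℕ) :=
  {i | (∀ r, 1 ≤ r → r ≤ e → 1 ≤ i r ∧ i r ≤ J r) ∧
    (∀ r, 1 ≤ r → r + 1 ≤ e → i r + t r ≤ i (r + 1))}

/-- The principal `t`-spread Borel ideal `B_t(x_{J 1} ⋯ x_{J e})`: the ideal generated by
all `t`-spread monomials `x_{i 1} ⋯ x_{i e}` with `i r ≤ J r` for all `r`. -/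
noncomputable def tBorel (K : Type*) [Field K] (n : ℕ) [NeZero n] (e : ℕ) (t J : ℕ → ℕ) :
    Ideal (MvPolynomial (Fin n) K) :=
  Ideal.span ((fun i => monOf K n e i) '' spreadIdx e t J)

/-- The monomial prime ideal `P_A = (x_p : p ∈ A)`, for a set `A` of 1-based positions. -/
noncomputable def pA (K : Type*) [Field K] (n : ℕ) [NeZero n] (A : Set ℕ) :
    Ideal (MvPolynomial (Fin n) K) := Ideal.span (xv K n '' A)

/-- The `t`-spread support `supp_t(x_{i 1} ⋯ x_{i e}) = ⋃_{s=1}^{e-1} [i s, i s + t s - 1]`. -/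
def tSupp (e : ℕ) (t : ℕ → ℕ) (i : ℕ → ℕ) : Set ℕ :=
  ⋃ s ∈ Finset.Icc 1 (e - 1), Set.Icc (i s) (i s + t s - 1)

/-- The `k`-th symbolic power of a (squarefree monomial) ideal: the intersection of the
`k`-th powers of its minimal primes. -/
noncomputable def symbPow {R : Type*} [CommRing R] (I : Ideal R) (k : ℕ) : Ideal R :=
  ⨅ P ∈ I.minimalPrimes, P ^ k

/-- The Alexander dual `⨅_{v} P_{supp v}` of the squarefree monomial ideal whose minimal
monomial generators are the degree `e` squarefree monomials indexed by `gen`. -/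
noncomputable def alexDualOf (K : Type*) [Field K] (n : ℕ) [NeZero n] (e : ℕ)
    (gen : Set (ℕ → ℕ)) : Ideal (MvPolynomial (Fin n) K) :=
  ⨅ i ∈ gen, pA K n (i '' Set.Icc 1 e)

/-- The height of an ideal: the infimum of the heights of its minimal primes, the height
of a prime being its height in the poset of prime ideals. -/
noncomputable def idealHeight {R : Type*} [CommRing R] (I : Ideal R) : ℕ∞ :=
  ⨅ (p : PrimeSpectrum R) (_ : p.asIdeal ∈ I.minimalPrimes), Order.height p

/-- The depth of the module `M` with respect to the ideal `P`: the supremum of the lengths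
of `M`-regular sequences consisting of elements of `P`. -/
noncomputable def depthWrt (R : Type*) (M : Type*) [CommRing R] [AddCommGroup M]
    [Module R M] (P : Ideal R) : ℕ∞ :=
  ⨆ (k : ℕ) (_ : ∃ x : Fin k → R, (∀ a, x a ∈ P) ∧
    RingTheory.Sequence.IsRegular M (List.ofFn x)), (k : ℕ∞)

/-- The (Krull) dimension of a module `M`: the Krull dimension of `R / ann M`. -/
noncomputable def modKrullDim (R : Type*) (M : Type*) [CommRing R] [AddCommGroup M]
    [Module R M] : WithBot ℕ∞ := ringKrullDim (R ⧸ Module.annihilator R M)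

/-- A module is Cohen–Macaulay (with respect to the ideal `P`, e.g. the graded maximal
ideal) if its depth equals its Krull dimension. -/
def IsCohenMacaulayMod (R : Type*) (M : Type*) [CommRing R] [AddCommGroup M] [Module R M]
    (P : Ideal R) : Prop := (depthWrt R M P : WithBot ℕ∞) = modKrullDim R M

/-- The depth of a local ring: max length of a regular sequence in the maximal ideal. -/
noncomputable def ringDepth (A : Type*) [CommRing A] [IsLocalRing A] : ℕ∞ :=
  depthWrt A A (IsLocalRing.maximalIdeal A)

/-- A local ring is Cohen–Macaulay if its depth equals its Krull dimension. -/
def IsCohenMacaulayLocalRing (A : Type*) [CommRing A] [IsLocalRing A] : Prop :=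
  (ringDepth A : WithBot ℕ∞) = ringKrullDim A

/-- A (commutative Noetherian) ring is Cohen–Macaulay if all its localizations at prime
ideals are Cohen–Macaulay local rings. -/
def IsCohenMacaulayRing (A : Type*) [CommRing A] : Prop :=
  ∀ (P : Ideal A) (hP : P.IsPrime), haveI := hP
    IsCohenMacaulayLocalRing (Localization.AtPrime P)

/-- The analytic spread of `I`: the Krull dimension of `R(I)/m R(I)`, where `R(I)` is the
Rees algebra of `I` and `m` the (graded maximal) ideal. -/
noncomputable def analyticSpread {R : Type*} [CommRing R] (m I : Ideal R) : WithBot ℕ∞ :=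
  ringKrullDim (↥(reesAlgebra I) ⧸ Ideal.map (algebraMap R ↥(reesAlgebra I)) m)

/-- `{p,q}` is an edge of the linear relation graph of the monomial ideal whose minimal
generators are the degree `e` squarefree monomials indexed by `gen` (positions 1-based,
within `[1,n]`). -/
def lrEdge (K : Type*) [Field K] (n : ℕ) [NeZero n] (e : ℕ) (gen : Set (ℕ → ℕ))
    (p q : ℕ) : Prop :=
  1 ≤ p ∧ p ≤ n ∧ 1 ≤ q ∧ q ≤ n ∧ p ≠ q ∧
    ∃ i ∈ gen, ∃ i' ∈ gen, xv K n p * monOf K n e i = xv K n q * monOf K n e i'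

/-- A facet of a simplicial complex: a maximal face. -/
def isFacet (Δ : Set (Finset ℕ)) (F : Finset ℕ) : Prop :=
  F ∈ Δ ∧ ∀ G ∈ Δ, F ⊆ G → F = G

/-- Vertex decomposability of a simplicial complex (faces as finsets of vertices):
either a simplex (including the void complex and `{∅}`), or there is a vertex whose
deletion and link are vertex decomposable and every facet of the deletion is a facet. -/
inductive VDecomp : Set (Finset ℕ) → Prop
  | empty : VDecomp ∅
  | simplex (A : Finset ℕ) : VDecomp {F | F ⊆ A}
  | step (Δ : Set (Finset ℕ)) (v : ℕ) (hv : ∃ F ∈ Δ, v ∈ F)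
      (hdel : VDecomp {F ∈ Δ | v ∉ F})
      (hlink : VDecomp {F | F ∈ Δ ∧ v ∉ F ∧ insert v F ∈ Δ})
      (hfac : ∀ F, isFacet {F ∈ Δ | v ∉ F} F → isFacet Δ F) : VDecomp Δ

/-- The `a`-th layer `J (a+1) / J a` of a filtration of ideals, as an `R`-module. -/
abbrev layerOf {R : Type*} [CommRing R] {r : ℕ} (J : Fin (r + 1) → Ideal R) (a : Fin r) :=
  ↥(J a.succ) ⧸ (Submodule.comap (J a.succ).subtype (J a.castSucc))


/-!
An associated prime of `S/I` is a colon ideal `P = (I : f)`, and since `I` is a monomial ideal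
we may drop from `f` every monomial lying in `I`. Comparing lex-leading monomials, `x_{j_p} ∈ P`
makes `x_{j_p} · lm(f)` divisible by a generator of `I`, and `u ∈ P²` makes `u · lm(f)²`
divisible by a product of two generators. The hypothesis `j_r ≤ t_1 + ⋯ + t_r` forces `x_{j_m}`
to occur only in position `m` of any generator; with this, in both situations the positionwise
minimum of the two generators involved is again a generator, and it divides `lm(f)`, which is
impossible.
-/

open scoped Pointwise

theorem Ideal.exists_forall_mem_iff_mul_mem_of_mem_associatedPrimes {R : Type*} [CommRing R]
    [IsNoetherianRing R] {I P : Ideal R} (hP : P ∈ associatedPrimes R (R ⧸ I)) :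
    ∃ f ∉ I, ∀ g, g ∈ P ↔ g * f ∈ I := by
  obtain ⟨hPprime, x, hx⟩ := isAssociatedPrime_iff.mp hP
  obtain ⟨f, rfl⟩ := Ideal.Quotient.mk_surjective x
  have hmem : ∀ g, g ∈ P ↔ g * f ∈ I := fun g => by
    rw [hx, Submodule.mem_colon_singleton, Submodule.mem_bot, ← Ideal.Quotient.eq_zero_iff_mem,
      map_mul]
    rfl
  refine ⟨f, fun hf => hPprime.ne_top ((Ideal.eq_top_iff_one _).mpr ?_), hmem⟩
  exact (hmem 1).mpr (by rwa [one_mul])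

theorem Ideal.mul_pow_mem_pow_of_mul_mem {R : Type*} [CommRing R] {I P : Ideal R} {f : R}
    (hP : ∀ g ∈ P, g * f ∈ I) (k : ℕ) {g : R} (hg : g ∈ P ^ k) : g * f ^ k ∈ I ^ k := by
  have hle : P * Ideal.span {f} ≤ I := Ideal.mul_le.mpr fun x hx y hy => by
    obtain ⟨c, rfl⟩ := Ideal.mem_span_singleton'.mp hy
    simpa [mul_left_comm] using I.mul_mem_left c (hP x hx)
  have := Ideal.pow_right_mono hle k
  rw [mul_pow] at this
  exact this (Ideal.mul_mem_mul hg (Ideal.pow_mem_pow (Ideal.mem_span_singleton_self f) k))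

namespace MvPolynomial

variable {σ R : Type*} [CommRing R]

theorem span_monomial_mul_span_monomial (A B : Set (σ →₀ ℕ)) :
    Ideal.span ((fun a => monomial a (1 : R)) '' A) *
      Ideal.span ((fun a => monomial a (1 : R)) '' B) =
      Ideal.span ((fun a => monomial a (1 : R)) '' (A + B)) := by
  rw [Ideal.span_mul_span', ← Set.image2_mul, Set.image2_image_left, Set.image2_image_right,
    ← Set.image2_add, Set.image_image2]
  simp only [monomial_mul, mul_one]

theorem exists_sub_mem_span_monomial_forall_not_le (A : Set (σ →₀ ℕ)) (f : MvPolynomial σ R) :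
    ∃ f', f - f' ∈ Ideal.span ((fun a => monomial a (1 : R)) '' A) ∧
      ∀ m ∈ f'.support, ∀ a ∈ A, ¬ a ≤ m := by
  classical
  let p : (σ →₀ ℕ) → Prop := fun m => ∃ a ∈ A, a ≤ m
  refine ⟨∑ m ∈ f.support with ¬ p m, monomial m (coeff m f), ?_, fun m hm a ha hle => ?_⟩
  · have hf := f.as_sum
    rw [← Finset.sum_filter_add_sum_filter_not f.support p] at hf
    rw [sub_eq_of_eq_add hf]
    refine Ideal.sum_mem _ fun m hm => ?_
    obtain ⟨a, ha, hle⟩ := (Finset.mem_filter.mp hm).2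
    rw [← tsub_add_cancel_of_le hle, ← mul_one (coeff _ f), ← monomial_mul]
    exact Ideal.mul_mem_left _ _ (Ideal.subset_span ⟨a, ha, rfl⟩)
  · obtain ⟨m', hm', hm'm⟩ := Finset.mem_biUnion.mp (support_sum hm)
    rw [← Finset.mem_singleton.mp (support_monomial_subset hm'm)] at hm'
    exact (Finset.mem_filter.mp hm').2 ⟨a, ha, hle⟩

theorem exists_le_degree_of_mem_span_monomial (ord : MonomialOrder σ) {A : Set (σ →₀ ℕ)}
    {g : MvPolynomial σ R} (hg : g ∈ Ideal.span ((fun a => monomial a (1 : R)) '' A))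
    (hg0 : g ≠ 0) : ∃ a ∈ A, a ≤ ord.degree g :=
  mem_ideal_span_monomial_image.mp hg _ (ord.degree_mem_support hg0)

theorem exists_forall_mem_iff_mul_mem_of_mem_associatedPrimes [IsNoetherianRing (MvPolynomial σ R)]
    (A : Set (σ →₀ ℕ)) {P : Ideal (MvPolynomial σ R)}
    (hP : P ∈ associatedPrimes (MvPolynomial σ R)
      (MvPolynomial σ R ⧸ Ideal.span ((fun a => monomial a (1 : R)) '' A))) :
    ∃ f ≠ 0, (∀ m ∈ f.support, ∀ a ∈ A, ¬ a ≤ m) ∧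
      ∀ g, g ∈ P ↔ g * f ∈ Ideal.span ((fun a => monomial a (1 : R)) '' A) := by
  set I := Ideal.span ((fun a => monomial a (1 : R)) '' A)
  obtain ⟨f, hf, hP⟩ := Ideal.exists_forall_mem_iff_mul_mem_of_mem_associatedPrimes hP
  obtain ⟨f', hff', hf'⟩ := exists_sub_mem_span_monomial_forall_not_le A f
  refine ⟨f', fun h0 => hf (by simpa [h0] using hff'), hf', fun g => ?_⟩
  have hdiff : g * f - g * f' ∈ I := mul_sub g f f' ▸ I.mul_mem_left g hff'
  rw [hP, ← I.sub_mem_iff_left hdiff, sub_sub_cancel]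

variable [IsDomain R] (ord : MonomialOrder σ) {A : Set (σ →₀ ℕ)} {P : Ideal (MvPolynomial σ R)}
  {f : MvPolynomial σ R}

theorem exists_le_single_add_degree
    (hPf : ∀ g, g ∈ P ↔ g * f ∈ Ideal.span ((fun a => monomial a (1 : R)) '' A)) (hf0 : f ≠ 0)
    {c : σ} (hc : X c ∈ P) : ∃ a ∈ A, a ≤ Finsupp.single c 1 + ord.degree f := by
  have := exists_le_degree_of_mem_span_monomial ord ((hPf _).mp hc) (mul_ne_zero (X_ne_zero c) hf0)
  rwa [ord.degree_mul (X_ne_zero c) hf0, ord.degree_X] at this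

theorem exists_add_le_add_degree_add_degree
    (hPf : ∀ g, g ∈ P ↔ g * f ∈ Ideal.span ((fun a => monomial a (1 : R)) '' A)) (hf0 : f ≠ 0)
    {b : σ →₀ ℕ} (hb : monomial b 1 ∈ P ^ 2) :
    ∃ a ∈ A, ∃ a' ∈ A, a + a' ≤ b + ord.degree f + ord.degree f := by
  classical
  have hb0 : (monomial b 1 : MvPolynomial σ R) ≠ 0 := by simp
  have h2 := Ideal.mul_pow_mem_pow_of_mul_mem (fun g hg => (hPf g).mp hg) 2 hb
  rw [pow_two, pow_two, span_monomial_mul_span_monomial] at h2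
  obtain ⟨_, ⟨a, ha, a', ha', rfl⟩, hle⟩ :=
    exists_le_degree_of_mem_span_monomial ord h2 (by simp [hb0, hf0])
  rw [ord.degree_mul hb0 (mul_ne_zero hf0 hf0), ord.degree_mul hf0 hf0, ord.degree_monomial,
    if_neg one_ne_zero, ← add_assoc] at hle
  exact ⟨a, ha, a', ha', hle⟩

end MvPolynomial

section Spread

variable {d : ℕ} {t J i i' : ℕ → ℕ}

theorem lt_of_mem_spreadIdx (ht : ∀ k, 1 ≤ k → k ≤ d - 1 → 1 ≤ t k) (hi : i ∈ spreadIdx d t J)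
    {r s : ℕ} (hr : 1 ≤ r) (hrs : r < s) (hs : s ≤ d) : i r < i s := by
  have step : ∀ s, 1 ≤ s → s + 1 ≤ d → i s < i (s + 1) := fun s h1 h2 => by
    have := hi.2 s h1 h2; have := ht s h1 (by omega); omega
  induction s, hrs using Nat.le_induction with
  | base => exact step r hr hs
  | succ s hrs ih => exact (ih (by omega)).trans (step s (by omega) hs)

theorem sum_lt_of_mem_spreadIdx (hi : i ∈ spreadIdx d t J) {r : ℕ} (hr : r + 1 ≤ d) :
    ∑ s ∈ Finset.Icc 1 r, t s < i (r + 1) := by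
  induction r with
  | zero => have := (hi.1 1 le_rfl hr).1; simp; omega
  | succ r ih =>
    rw [Finset.sum_Icc_succ_top (by omega)]
    have := ih (by omega); have := hi.2 (r + 1) (by omega) hr
    omega

theorem self_mem_spreadIdx (hJ1 : 1 ≤ J 1) (hJmono : ∀ p q, 1 ≤ p → p < q → q ≤ d → J p < J q)
    (hspread : ∀ k, 1 ≤ k → k ≤ d - 1 → J k + t k ≤ J (k + 1)) : J ∈ spreadIdx d t J := by
  refine ⟨fun r hr hrd => ⟨?_, le_rfl⟩, fun r hr hrd => hspread r hr (by omega)⟩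
  rcases hr.lt_or_eq with h | rfl
  exacts [hJ1.trans (hJmono 1 r le_rfl h hrd).le, hJ1]

theorem min_mem_spreadIdx (hi : i ∈ spreadIdx d t J) (hi' : i' ∈ spreadIdx d t J) :
    (fun r => min (i r) (i' r)) ∈ spreadIdx d t J := by
  refine ⟨fun r h1 h2 => ⟨le_min (hi.1 r h1 h2).1 (hi'.1 r h1 h2).1,
    (min_le_left _ _).trans (hi.1 r h1 h2).2⟩, fun r h1 h2 => ?_⟩
  have := hi.2 r h1 h2; have := hi'.2 r h1 h2
  simp only
  omega

theorem eq_of_mem_spreadIdx_of_apply_eq (hJmono : ∀ p q, 1 ≤ p → p < q → q ≤ d → J p < J q)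
    (hc : ∀ r, 1 ≤ r → r ≤ d - 1 → J r ≤ ∑ s ∈ Finset.Icc 1 r, t s)
    (hi : i ∈ spreadIdx d t J) {r m : ℕ} (hr : 1 ≤ r)
    (hrd : r ≤ d) (hm : 1 ≤ m) (hmd : m ≤ d) (he : i r = J m) : r = m := by
  rcases lt_trichotomy r m with h | h | h
  · have := (hi.1 r hr hrd).2; have := hJmono r m hr h hmd
    omega
  · exact h
  · have hlt := sum_lt_of_mem_spreadIdx hi (r := r - 1) (by omega)
    rw [Nat.sub_add_cancel hr] at hlt
    have : ∑ s ∈ Finset.Icc 1 m, t s ≤ ∑ s ∈ Finset.Icc 1 (r - 1), t s :=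
      Finset.sum_le_sum_of_subset (Finset.Icc_subset_Icc_right (by omega))
    have := hc m hm (by omega)
    omega

theorem apply_eq_of_le_of_apply_eq (hJmono : ∀ p q, 1 ≤ p → p < q → q ≤ d → J p < J q)
    (hc : ∀ r, 1 ≤ r → r ≤ d - 1 → J r ≤ ∑ s ∈ Finset.Icc 1 r, t s)
    (hi : i ∈ spreadIdx d t J) (hi' : i' ∈ spreadIdx d t J) {r m : ℕ}
    (hr : 1 ≤ r) (hrd : r ≤ d) (hm : 1 ≤ m) (hmd : m ≤ d) (he : i r = J m) (hle : i r ≤ i' r) :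
    i' r = i r := by
  obtain rfl := eq_of_mem_spreadIdx_of_apply_eq hJmono hc hi hr hrd hm hmd he
  have := (hi'.1 r hr hrd).2
  omega

theorem min_mem_of_forall_not_mem (hJmono : ∀ p q, 1 ≤ p → p < q → q ≤ d → J p < J q)
    (hc : ∀ r, 1 ≤ r → r ≤ d - 1 → J r ≤ ∑ s ∈ Finset.Icc 1 r, t s)
    (hi : i ∈ spreadIdx d t J) (hi' : i' ∈ spreadIdx d t J) {M : Set ℕ}
    (hiM : ∀ r, 1 ≤ r → r ≤ d → i r ∉ M → (∃ m, 1 ≤ m ∧ m ≤ d ∧ i r = J m) ∧ i' r ≠ i r)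
    (hi'M : ∀ r, 1 ≤ r → r ≤ d → i' r ∉ M → (∃ m, 1 ≤ m ∧ m ≤ d ∧ i' r = J m) ∧ i r ≠ i' r)
    {r : ℕ} (hr : 1 ≤ r) (hrd : r ≤ d) : min (i r) (i' r) ∈ M := by
  rcases le_total (i r) (i' r) with hle | hle
  · rw [min_eq_left hle]
    by_contra hM
    obtain ⟨⟨m, hm, hmd, he⟩, hne⟩ := hiM r hr hrd hM
    exact hne (apply_eq_of_le_of_apply_eq hJmono hc hi hi' hr hrd hm hmd he hle)
  · rw [min_eq_right hle]
    by_contra hM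
    obtain ⟨⟨m, hm, hmd, he⟩, hne⟩ := hi'M r hr hrd hM
    exact hne (apply_eq_of_le_of_apply_eq hJmono hc hi' hi hr hrd hm hmd he hle)

theorem mem_Icc_of_mem_spreadIdx (hJmono : ∀ p q, 1 ≤ p → p < q → q ≤ d → J p < J q)
    (hi : i ∈ spreadIdx d t J) {r : ℕ} (hr : 1 ≤ r) (hrd : r ≤ d) :
    i r ∈ Set.Icc 1 (J d) := by
  refine ⟨(hi.1 r hr hrd).1, (hi.1 r hr hrd).2.trans ?_⟩
  rcases hrd.lt_or_eq with h | rfl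
  · exact (hJmono r d hr h le_rfl).le
  · exact le_rfl

end Spread

section Encoding

variable {K : Type*} [Field K] {n : ℕ} [NeZero n] {d : ℕ} {t J i : ℕ → ℕ}

def varIdx (n : ℕ) [NeZero n] (p : ℕ) : Fin n := Fin.ofNat n (p - 1)

theorem varIdx_injOn : Set.InjOn (varIdx n) (Set.Icc 1 n) := by
  intro p ⟨hp, hpn⟩ q ⟨hq, hqn⟩ h
  have := congrArg Fin.val h
  simp only [varIdx, Fin.val_ofNat] at this
  rw [Nat.mod_eq_of_lt (by omega), Nat.mod_eq_of_lt (by omega)] at this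
  omega

theorem xv_eq_X (p : ℕ) : xv K n p = X (varIdx n p) := rfl

noncomputable def expVec (n : ℕ) [NeZero n] (d : ℕ) (i : ℕ → ℕ) : Fin n →₀ ℕ :=
  ∑ r ∈ Finset.Icc 1 d, Finsupp.single (varIdx n (i r)) 1

theorem monOf_eq_monomial : monOf K n d i = monomial (expVec n d i) 1 := by
  rw [monOf, expVec, monomial_sum_one]
  rfl

theorem tBorel_eq_span_monomial :
    tBorel K n d t J = Ideal.span ((fun a => monomial a 1) '' (expVec n d '' spreadIdx d t J)) := by
  rw [tBorel, Set.image_image]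
  simp only [monOf_eq_monomial]

theorem expVec_apply (hinj : Set.InjOn (fun r => varIdx n (i r)) (Finset.Icc 1 d)) (c : Fin n) :
    expVec n d i c = if c ∈ (Finset.Icc 1 d).image (fun r => varIdx n (i r)) then 1 else 0 := by
  classical
  rw [expVec, ← Finset.sum_image (f := fun c => Finsupp.single c 1) hinj, Finsupp.finsetSum_apply]
  simp [Finsupp.single_apply]

theorem expVec_le_iff (hinj : Set.InjOn (fun r => varIdx n (i r)) (Finset.Icc 1 d))
    {μ : Fin n →₀ ℕ} : expVec n d i ≤ μ ↔ ∀ r ∈ Finset.Icc 1 d, μ (varIdx n (i r)) ≠ 0 := by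
  simp only [Finsupp.le_def, expVec_apply hinj]
  constructor
  · intro h r hr
    have := h (varIdx n (i r))
    rw [if_pos (Finset.mem_image_of_mem _ hr)] at this
    omega
  · intro h c
    split_ifs with hc
    · obtain ⟨r, hr, rfl⟩ := Finset.mem_image.mp hc
      exact Nat.one_le_iff_ne_zero.mpr (h r hr)
    · exact zero_le

theorem injOn_varIdx_of_mem_spreadIdx (ht : ∀ k, 1 ≤ k → k ≤ d - 1 → 1 ≤ t k)
    (hJmono : ∀ p q, 1 ≤ p → p < q → q ≤ d → J p < J q) (hJd : J d = n) (hi : i ∈ spreadIdx d t J) :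
    Set.InjOn (fun r => varIdx n (i r)) (Finset.Icc 1 d) := by
  intro r hr s hs h
  simp only [Finset.coe_Icc, Set.mem_Icc] at hr hs
  have := varIdx_injOn (hJd ▸ mem_Icc_of_mem_spreadIdx hJmono hi hr.1 hr.2)
    (hJd ▸ mem_Icc_of_mem_spreadIdx hJmono hi hs.1 hs.2) h
  rcases lt_trichotomy r s with h | h | h
  · exact absurd this (lt_of_mem_spreadIdx ht hi hr.1 h hs.2).ne
  · exact h
  · exact absurd this (lt_of_mem_spreadIdx ht hi hs.1 h hr.2).ne'

end Encoding

section Exchange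

variable {n : ℕ} [NeZero n] {d : ℕ} {t J i i' : ℕ → ℕ}

theorem varIdx_eq_varIdx_iff_of_mem_spreadIdx (ht : ∀ k, 1 ≤ k → k ≤ d - 1 → 1 ≤ t k)
    (hJ : J ∈ spreadIdx d t J) (hJd : J d = n) (hi : i ∈ spreadIdx d t J)
    (hi' : i' ∈ spreadIdx d t J) {r s : ℕ} (hr : 1 ≤ r) (hrd : r ≤ d) (hs : 1 ≤ s) (hsd : s ≤ d) :
    varIdx n (i r) = varIdx n (i' s) ↔ i r = i' s := by
  have hJmono : ∀ p q, 1 ≤ p → p < q → q ≤ d → J p < J q :=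
    fun p q hp hpq hqd => lt_of_mem_spreadIdx ht hJ hp hpq hqd
  refine ⟨fun h => varIdx_injOn ?_ ?_ h, congrArg _⟩ <;> rw [← hJd]
  exacts [mem_Icc_of_mem_spreadIdx hJmono hi hr hrd, mem_Icc_of_mem_spreadIdx hJmono hi' hs hsd]

theorem exists_expVec_le_of_le_single_add (ht : ∀ k, 1 ≤ k → k ≤ d - 1 → 1 ≤ t k)
    (hJ : J ∈ spreadIdx d t J) (hJd : J d = n)
    (hc : ∀ r, 1 ≤ r → r ≤ d - 1 → J r ≤ ∑ s ∈ Finset.Icc 1 r, t s)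
    (hi : i ∈ spreadIdx d t J) (hi' : i' ∈ spreadIdx d t J) {p q : ℕ} (hp : 1 ≤ p) (hpd : p ≤ d)
    (hq : 1 ≤ q) (hqd : q ≤ d) (hpq : p ≠ q) {μ : Fin n →₀ ℕ}
    (h : expVec n d i ≤ Finsupp.single (varIdx n (J p)) 1 + μ)
    (h' : expVec n d i' ≤ Finsupp.single (varIdx n (J q)) 1 + μ) :
    ∃ i'' ∈ spreadIdx d t J, expVec n d i'' ≤ μ := by
  have hJmono : ∀ p q, 1 ≤ p → p < q → q ≤ d → J p < J q :=
    fun p q hp hpq hqd => lt_of_mem_spreadIdx ht hJ hp hpq hqd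
  have heq_of_zero {g m} (hg : g ∈ spreadIdx d t J) (hm : 1 ≤ m) (hmd : m ≤ d)
      (hle : expVec n d g ≤ Finsupp.single (varIdx n (J m)) 1 + μ) {r} (hr : 1 ≤ r) (hrd : r ≤ d)
      (h0 : μ (varIdx n (g r)) = 0) : g r = J m := by
    have := (expVec_le_iff (injOn_varIdx_of_mem_spreadIdx ht hJmono hJd hg)).mp hle r
      (Finset.mem_Icc.mpr ⟨hr, hrd⟩)
    rw [Finsupp.add_apply, h0, add_zero, Finsupp.single_apply] at this
    exact (varIdx_eq_varIdx_iff_of_mem_spreadIdx ht hJ hJd hg hJ hr hrd hm hmd).mp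
      (ite_ne_right_iff.mp this).1.symm
  have hJpq : J p ≠ J q := fun he =>
    hpq (eq_of_mem_spreadIdx_of_apply_eq hJmono hc hJ hp hpd hq hqd he)
  have hmin := min_mem_spreadIdx hi hi'
  refine ⟨_, hmin, (expVec_le_iff (injOn_varIdx_of_mem_spreadIdx ht hJmono hJd hmin)).mpr
    fun r hr => ?_⟩
  rw [Finset.mem_Icc] at hr
  refine min_mem_of_forall_not_mem (M := {x | μ (varIdx n x) ≠ 0}) hJmono hc hi hi' ?_ ?_ hr.1 hr.2
  · intro r hr hrd hM
    have he := heq_of_zero hi hp hpd h hr hrd (not_not.mp hM)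
    refine ⟨⟨p, hp, hpd, he⟩, fun he' => hJpq ?_⟩
    rw [← he, ← he', heq_of_zero hi' hq hqd h' hr hrd (he' ▸ not_not.mp hM)]
  · intro r hr hrd hM
    have he := heq_of_zero hi' hq hqd h' hr hrd (not_not.mp hM)
    refine ⟨⟨q, hq, hqd, he⟩, fun he' => hJpq ?_⟩
    rw [← he, ← he', heq_of_zero hi hp hpd h hr hrd (he' ▸ not_not.mp hM)]

theorem exists_expVec_le_of_add_le (ht : ∀ k, 1 ≤ k → k ≤ d - 1 → 1 ≤ t k)
    (hJ : J ∈ spreadIdx d t J) (hJd : J d = n)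
    (hc : ∀ r, 1 ≤ r → r ≤ d - 1 → J r ≤ ∑ s ∈ Finset.Icc 1 r, t s)
    (hi : i ∈ spreadIdx d t J) (hi' : i' ∈ spreadIdx d t J) {μ : Fin n →₀ ℕ}
    (h : expVec n d i + expVec n d i' ≤ expVec n d J + μ + μ) :
    ∃ i'' ∈ spreadIdx d t J, expVec n d i'' ≤ μ := by
  have hJmono : ∀ p q, 1 ≤ p → p < q → q ≤ d → J p < J q :=
    fun p q hp hpq hqd => lt_of_mem_spreadIdx ht hJ hp hpq hqd
  have hinj {g} (hg : g ∈ spreadIdx d t J) := injOn_varIdx_of_mem_spreadIdx ht hJmono hJd hg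
  have hslot_of_zero {g g'} (hg : g ∈ spreadIdx d t J) (hg' : g' ∈ spreadIdx d t J)
      (hle : expVec n d g + expVec n d g' ≤ expVec n d J + μ + μ) {r} (hr : 1 ≤ r) (hrd : r ≤ d)
      (h0 : μ (varIdx n (g r)) = 0) : (∃ m, 1 ≤ m ∧ m ≤ d ∧ g r = J m) ∧ g' r ≠ g r := by
    have hle := Finsupp.le_def.mp hle (varIdx n (g r))
    simp only [Finsupp.add_apply, h0, add_zero, expVec_apply (hinj hg), expVec_apply (hinj hg'),
      expVec_apply (hinj hJ), if_pos (Finset.mem_image_of_mem _ (Finset.mem_Icc.mpr ⟨hr, hrd⟩))]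
      at hle
    obtain ⟨hJr, hg'r⟩ : varIdx n (g r) ∈ (Finset.Icc 1 d).image (fun r => varIdx n (J r)) ∧
        varIdx n (g r) ∉ (Finset.Icc 1 d).image (fun r => varIdx n (g' r)) := by
      split_ifs at hle <;> first | omega | exact ⟨‹_›, ‹_›⟩
    obtain ⟨m, hm, hme⟩ := Finset.mem_image.mp hJr
    rw [Finset.mem_Icc] at hm
    refine ⟨⟨m, hm.1, hm.2,
      ((varIdx_eq_varIdx_iff_of_mem_spreadIdx ht hJ hJd hJ hg hm.1 hm.2 hr hrd).mp hme).symm⟩,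
      fun he => hg'r (Finset.mem_image.mpr ⟨r, Finset.mem_Icc.mpr ⟨hr, hrd⟩, by rw [he]⟩)⟩
  have hmin := min_mem_spreadIdx hi hi'
  refine ⟨_, hmin, (expVec_le_iff (hinj hmin)).mpr fun r hr => ?_⟩
  rw [Finset.mem_Icc] at hr
  refine min_mem_of_forall_not_mem (M := {x | μ (varIdx n x) ≠ 0}) hJmono hc hi hi'
    (fun r hr hrd hM => hslot_of_zero hi hi' h hr hrd (not_not.mp hM))
    (fun r hr hrd hM => hslot_of_zero hi' hi (add_comm (expVec n d i) _ ▸ h) hr hrd (not_not.mp hM))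
    hr.1 hr.2

end Exchange

theorem stmt16_general (K : Type*) [Field K] (n d : ℕ) [NeZero n] (t j : ℕ → ℕ)
    (ht : ∀ k, 1 ≤ k → k ≤ d - 1 → 1 ≤ t k)
    (hj1 : 1 ≤ j 1) (hjmono : ∀ p q, 1 ≤ p → p < q → q ≤ d → j p < j q)
    (hjd : j d = n) (hspread : ∀ k, 1 ≤ k → k ≤ d - 1 → j k + t k ≤ j (k + 1))
    (hc : ∀ r, 1 ≤ r → r ≤ d - 1 → j r ≤ ∑ s ∈ Finset.Icc 1 r, t s) :
    ∀ P ∈ associatedPrimes (MvPolynomial (Fin n) K)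
        (MvPolynomial (Fin n) K ⧸ tBorel K n d t j),
      (∃! r : ℕ, (1 ≤ r ∧ r ≤ d) ∧ xv K n (j r) ∈ P) ∧
      monOf K n d j ∈ P ∧ monOf K n d j ∉ P ^ 2 := by
  intro P hP
  have hJ := self_mem_spreadIdx hj1 hjmono hspread
  have := hP.isPrime
  rw [tBorel_eq_span_monomial] at hP
  obtain ⟨f, hf0, hfA, hPf⟩ := exists_forall_mem_iff_mul_mem_of_mem_associatedPrimes _ hP
  let ord : MonomialOrder (Fin n) := MonomialOrder.lex
  have hf : ¬ ∃ i ∈ spreadIdx d t j, expVec n d i ≤ ord.degree f := fun ⟨i, hi, hle⟩ =>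
    hfA _ (ord.degree_mem_support hf0) _ ⟨i, hi, rfl⟩ hle
  have hu : monOf K n d j ∈ P := (hPf _).mpr <|
    Ideal.mul_mem_right _ _ (Ideal.subset_span ⟨_, ⟨j, hJ, rfl⟩, monOf_eq_monomial.symm⟩)
  refine ⟨?_, hu, fun hu2 => hf ?_⟩
  · obtain ⟨r, hr, hxr⟩ := (Ideal.IsPrime.prod_mem_iff).mp hu
    rw [Finset.mem_Icc] at hr
    refine ⟨r, ⟨hr, hxr⟩, fun q ⟨hq, hxq⟩ => by_contra fun hqr => hf ?_⟩
    obtain ⟨_, ⟨i, hi, rfl⟩, hle⟩ := exists_le_single_add_degree ord hPf hf0 hxq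
    obtain ⟨_, ⟨i', hi', rfl⟩, hle'⟩ := exists_le_single_add_degree ord hPf hf0 hxr
    exact exists_expVec_le_of_le_single_add ht hJ hjd hc hi hi' hq.1 hq.2 hr.1 hr.2 hqr hle hle'
  · rw [monOf_eq_monomial] at hu2
    obtain ⟨_, ⟨i, hi, rfl⟩, _, ⟨i', hi', rfl⟩, hle⟩ :=
      exists_add_le_add_degree_add_degree ord hPf hf0 hu2
    exact exists_expVec_le_of_add_le ht hJ hjd hc hi hi' hle

/-- If `j i ≤ t 1 + ⋯ + t i` for all `i = 1,…,d-1`, then every associated prime `P` of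
`S/B_t(u)` contains exactly one of the variables `x_{j 1},…,x_{j d}`; consequently
`u ∈ P ∖ P²` for every such `P`. -/
theorem stmt16 (K : Type*) [Field K] (n d : ℕ) [NeZero n] (t j : ℕ → ℕ)
    (hd : 2 ≤ d) (ht : ∀ k, 1 ≤ k → k ≤ d - 1 → 1 ≤ t k)
    (hj1 : 1 ≤ j 1) (hjmono : ∀ p q, 1 ≤ p → p < q → q ≤ d → j p < j q)
    (hjd : j d = n) (hspread : ∀ k, 1 ≤ k → k ≤ d - 1 → j k + t k ≤ j (k + 1))
    (hc : ∀ r, 1 ≤ r → r ≤ d - 1 → j r ≤ ∑ s ∈ Finset.Icc 1 r, t s) :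
    ∀ P ∈ associatedPrimes (MvPolynomial (Fin n) K)
        (MvPolynomial (Fin n) K ⧸ tBorel K n d t j),
      (∃! r : ℕ, (1 ≤ r ∧ r ≤ d) ∧ xv K n (j r) ∈ P) ∧
      monOf K n d j ∈ P ∧ monOf K n d j ∉ P ^ 2 :=
  stmt16_general K n d t j ht hj1 hjmono hjd hspread hc
end

section
/- Suppose there is l in {1,...,d-1} such that j_p <= t_1 + ... + t_p for all p = 1,...,l-1 and j_l > t_1 + ... + t_l. Set a = t_1 + ... + t_{l-1} + 1 and let φ : S → K[x_a, x_{a+1},...,x_n] be the K-algebra homomorphism with φ(x_j) = 1 for j < a and φ(x_j) = x_j for j >= a. Then the monomial localization φ(B_t(u)), as an ideal of K[x_a,...,x_n], equals the ideal generated by all monomials x_{i_l} x_{i_{l+1}} ... x_{i_d} with a <= i_l, i_{p+1} - i_p >= t_p for p = l,...,d-1, and i_p <= j_p for all p = l,...,d. -/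
open Finset MvPolynomial

/-! Under `φ`, the variables `x_p` with `p < a` go to `1` and the others survive, so a
generator `x_{i 1} ⋯ x_{i d}` of `B_t(u)` maps to the product of its surviving factors.
The hypothesis `j p ≤ t 1 + ⋯ + t p` for `p < l` forces `i p < a` for `p < l`, while
`t`-spreadness forces `i p ≥ 1 + t 1 + ⋯ + t (p-1) ≥ a` for `p ≥ l`; hence the image is
exactly `x_{i l} ⋯ x_{i d}`.  Conversely, every such tail comes from a generator of
`B_t(u)`: prepend the smallest `t`-spread prefix `x_1 x_{1 + t 1} ⋯`. -/

noncomputable def substOneBelow (K : Type*) [Field K] (n : ℕ) (a : ℕ) :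
    MvPolynomial (Fin n) K →ₐ[K] MvPolynomial (Fin n) K :=
  aeval fun v : Fin n => if (v : ℕ) + 1 < a then 1 else X v

/-- Position of the `r`-th factor of the smallest `t`-spread monomial `x_1 x_{1 + t 1} ⋯`. -/
def spreadStart (t : ℕ → ℕ) (r : ℕ) : ℕ := ∑ s ∈ Icc 1 (r - 1), t s + 1

def spreadIdxFrom (l e a : ℕ) (t J : ℕ → ℕ) : Set (ℕ → ℕ) :=
  {i | a ≤ i l ∧ (∀ p, l ≤ p → p ≤ e → i p ≤ J p) ∧
    (∀ p, l ≤ p → p + 1 ≤ e → i p + t p ≤ i (p + 1))}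

section substOneBelow

variable {K : Type*} [Field K] {n : ℕ} [NeZero n]

theorem substOneBelow_xv {a p : ℕ} (hp : 1 ≤ p) (hpn : p ≤ n) :
    substOneBelow K n a (xv K n p) = if a ≤ p then xv K n p else 1 := by
  have hv : ((Fin.ofNat n (p - 1) : Fin n) : ℕ) + 1 = p := by
    rw [Fin.val_ofNat, Nat.mod_eq_of_lt (by omega)]
    omega
  rw [substOneBelow, xv, aeval_X, hv]
  split_ifs <;> first | rfl | omega

theorem substOneBelow_prod_xv {a : ℕ} {s : Finset ℕ} {i : ℕ → ℕ}
    (hi : ∀ r ∈ s, 1 ≤ i r ∧ i r ≤ n) :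
    substOneBelow K n a (∏ r ∈ s, xv K n (i r)) = ∏ r ∈ s with a ≤ i r, xv K n (i r) := by
  rw [map_prod, prod_filter]
  exact prod_congr rfl fun r hr => substOneBelow_xv (hi r hr).1 (hi r hr).2

end substOneBelow

theorem spreadStart_succ (t : ℕ → ℕ) (r : ℕ) :
    spreadStart t (r + 1) = ∑ s ∈ Icc 1 r, t s + 1 := rfl

theorem spreadStart_add (t : ℕ → ℕ) {r : ℕ} (hr : 1 ≤ r) :
    spreadStart t r + t r = spreadStart t (r + 1) := by
  obtain ⟨m, rfl⟩ : ∃ m, r = m + 1 := ⟨r - 1, by omega⟩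
  rw [spreadStart_succ, spreadStart_succ, sum_Icc_succ_top (by omega)]
  omega

theorem spreadStart_mono (t : ℕ → ℕ) : Monotone (spreadStart t) := fun _ _ h =>
  Nat.add_le_add_right (sum_le_sum_of_subset (Icc_subset_Icc_right (by omega))) 1

theorem one_le_spreadStart (t : ℕ → ℕ) (r : ℕ) : 1 ≤ spreadStart t r :=
  Nat.le_add_left 1 _

theorem spreadStart_le {e : ℕ} {t i : ℕ → ℕ} (hi1 : 1 ≤ i 1)
    (hsp : ∀ r, 1 ≤ r → r + 1 ≤ e → i r + t r ≤ i (r + 1)) {r : ℕ} (hr : 1 ≤ r)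
    (hre : r ≤ e) : spreadStart t r ≤ i r := by
  induction r, hr using Nat.le_induction with
  | base => simpa [spreadStart] using hi1
  | succ r hr ih =>
    have hir := ih (by omega)
    have hstep := hsp r hr hre
    rw [← spreadStart_add t hr]
    omega

section spreadIdx

variable {e l : ℕ} {t J i : ℕ → ℕ}

theorem mem_spreadIdxFrom_of_mem_spreadIdx (hl : 1 ≤ l) (hle : l ≤ e)
    (hi : i ∈ spreadIdx e t J) : i ∈ spreadIdxFrom l e (spreadStart t l) t J :=
  ⟨spreadStart_le (hi.1 1 le_rfl (by omega)).1 hi.2 hl hle,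
    fun p hp hpe => (hi.1 p (by omega) hpe).2, fun p hp hpe => hi.2 p (by omega) hpe⟩

theorem prefix_mem_spreadIdx (ht : ∀ k, 1 ≤ k → k ≤ e - 1 → 1 ≤ t k) (hJ1 : 1 ≤ J 1)
    (hJ : ∀ r, 1 ≤ r → r + 1 ≤ e → J r + t r ≤ J (r + 1)) (hl : 1 ≤ l)
    (hi : i ∈ spreadIdxFrom l e (spreadStart t l) t J) :
    (fun r => if r < l then spreadStart t r else i r) ∈ spreadIdx e t J := by
  obtain ⟨hil, hiJ, hsp⟩ := hi
  refine ⟨fun r hr hre => ?_, fun r hr hre => ?_⟩ <;> dsimp only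
  · split_ifs with hrl
    · exact ⟨one_le_spreadStart t r, spreadStart_le hJ1 hJ hr hre⟩
    · refine ⟨?_, hiJ r (by omega) hre⟩
      rcases (show r = l ∨ l < r by omega) with rfl | hlr
      · exact (one_le_spreadStart t r).trans hil
      · have hstep := hsp (r - 1) (by omega) (by omega)
        have htr := ht (r - 1) (by omega) (by omega)
        rw [Nat.sub_add_cancel (by omega)] at hstep
        omega
  · rcases lt_trichotomy (r + 1) l with h | rfl | h
    · simp only [if_pos h, if_pos (show r < l by omega)]
      exact (spreadStart_add t hr).le
    · rw [if_pos (by omega), if_neg (lt_irrefl _)]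
      exact (spreadStart_add t hr).trans_le hil
    · simp only [if_neg (show ¬r < l by omega), if_neg (show ¬r + 1 < l by omega)]
      exact hsp r (by omega) hre

variable {K : Type*} [Field K] {n : ℕ} [NeZero n]

theorem substOneBelow_monOf (hi : i ∈ spreadIdx e t J)
    (hJn : ∀ r, 1 ≤ r → r ≤ e → J r ≤ n) (hl : 1 ≤ l)
    (hJ : ∀ p, 1 ≤ p → p ≤ l - 1 → J p ≤ ∑ s ∈ Icc 1 p, t s) :
    substOneBelow K n (spreadStart t l) (monOf K n e i) = ∏ r ∈ Icc l e, xv K n (i r) := by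
  obtain ⟨hiJ, hsp⟩ := hi
  rw [monOf, substOneBelow_prod_xv fun r hr => by
    simp only [mem_Icc] at hr
    exact ⟨(hiJ r hr.1 hr.2).1, (hiJ r hr.1 hr.2).2.trans (hJn r hr.1 hr.2)⟩]
  congr 1
  ext r
  simp only [mem_filter, mem_Icc]
  constructor
  · rintro ⟨⟨hr, hre⟩, ha⟩
    refine ⟨?_, hre⟩
    by_contra! hrl
    have hJr := hJ r hr (by omega)
    have hmono := spreadStart_mono t (show r + 1 ≤ l by omega)
    have hir := (hiJ r hr hre).2
    rw [spreadStart_succ] at hmono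
    omega
  · rintro ⟨hlr, hre⟩
    exact ⟨⟨by omega, hre⟩, (spreadStart_mono t hlr).trans
      (spreadStart_le (hiJ 1 le_rfl (by omega)).1 hsp (by omega) hre)⟩

end spreadIdx

theorem stmt18_general (K : Type*) [Field K] (n d : ℕ) [NeZero n] (t j : ℕ → ℕ)
    (ht : ∀ k, 1 ≤ k → k ≤ d - 1 → 1 ≤ t k)
    (hj1 : 1 ≤ j 1) (hjmono : ∀ p q, 1 ≤ p → p < q → q ≤ d → j p < j q)
    (hjd : j d = n) (hspread : ∀ k, 1 ≤ k → k ≤ d - 1 → j k + t k ≤ j (k + 1))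
    (l : ℕ) (hl1 : 1 ≤ l) (hld : l ≤ d - 1)
    (hbelow : ∀ p, 1 ≤ p → p ≤ l - 1 → j p ≤ ∑ s ∈ Finset.Icc 1 p, t s) :
    Ideal.map
        (MvPolynomial.aeval (fun v : Fin n =>
          if (v : ℕ) + 1 < (∑ s ∈ Finset.Icc 1 (l - 1), t s) + 1 then 1
          else MvPolynomial.X v) :
          MvPolynomial (Fin n) K →ₐ[K] MvPolynomial (Fin n) K)
        (tBorel K n d t j) =
      Ideal.span ((fun i => ∏ r ∈ Finset.Icc l d, xv K n (i r)) ''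
        {i : ℕ → ℕ | (∑ s ∈ Finset.Icc 1 (l - 1), t s) + 1 ≤ i l ∧
          (∀ p, l ≤ p → p ≤ d → i p ≤ j p) ∧
          (∀ p, l ≤ p → p + 1 ≤ d → i p + t p ≤ i (p + 1))}) := by
  have hjn : ∀ r, 1 ≤ r → r ≤ d → j r ≤ n := fun r hr hrd =>
    hjd ▸ hrd.eq_or_lt.elim (fun h => h ▸ le_rfl) fun h => (hjmono r d hr h le_rfl).le
  have hjsp : ∀ r, 1 ≤ r → r + 1 ≤ d → j r + t r ≤ j (r + 1) := fun r hr hrd =>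
    hspread r hr (by omega)
  change Ideal.map (substOneBelow K n (spreadStart t l)) (tBorel K n d t j) =
    Ideal.span ((fun i => ∏ r ∈ Icc l d, xv K n (i r)) ''
      spreadIdxFrom l d (spreadStart t l) t j)
  rw [tBorel, Ideal.map_span, Set.image_image]
  congr 1
  ext x
  constructor
  · rintro ⟨i, hi, rfl⟩
    exact ⟨i, mem_spreadIdxFrom_of_mem_spreadIdx hl1 (by omega) hi,
      (substOneBelow_monOf hi hjn hl1 hbelow).symm⟩
  · rintro ⟨i, hi, rfl⟩
    have hi' := prefix_mem_spreadIdx ht hj1 hjsp hl1 hi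
    refine ⟨_, hi', ?_⟩
    dsimp only
    rw [substOneBelow_monOf hi' hjn hl1 hbelow]
    refine prod_congr rfl fun r hr => ?_
    rw [if_neg (by simp only [mem_Icc] at hr; omega)]

/-- Suppose `l ∈ {1,…,d-1}` satisfies `j p ≤ t 1 + ⋯ + t p` for `p = 1,…,l-1` and
`j l > t 1 + ⋯ + t l`.  Set `a = t 1 + ⋯ + t (l-1) + 1` and let `φ` be the `K`-algebra map
sending `x_p ↦ 1` for `p < a` and fixing the other variables (monomial localization).
Then `φ(B_t(u))` is the ideal generated by all monomials `x_{i l} x_{i (l+1)} ⋯ x_{i d}`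
with `a ≤ i l`, `i (p+1) - i p ≥ t p` for `p = l,…,d-1` and `i p ≤ j p` for
`p = l,…,d`. -/
theorem stmt18 (K : Type*) [Field K] (n d : ℕ) [NeZero n] (t j : ℕ → ℕ)
    (hd : 2 ≤ d) (ht : ∀ k, 1 ≤ k → k ≤ d - 1 → 1 ≤ t k)
    (hj1 : 1 ≤ j 1) (hjmono : ∀ p q, 1 ≤ p → p < q → q ≤ d → j p < j q)
    (hjd : j d = n) (hspread : ∀ k, 1 ≤ k → k ≤ d - 1 → j k + t k ≤ j (k + 1))
    (l : ℕ) (hl1 : 1 ≤ l) (hld : l ≤ d - 1)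
    (hbelow : ∀ p, 1 ≤ p → p ≤ l - 1 → j p ≤ ∑ s ∈ Finset.Icc 1 p, t s)
    (habove : (∑ s ∈ Finset.Icc 1 l, t s) < j l) :
    Ideal.map
        (MvPolynomial.aeval (fun v : Fin n =>
          if (v : ℕ) + 1 < (∑ s ∈ Finset.Icc 1 (l - 1), t s) + 1 then 1
          else MvPolynomial.X v) :
          MvPolynomial (Fin n) K →ₐ[K] MvPolynomial (Fin n) K)
        (tBorel K n d t j) =
      Ideal.span ((fun i => ∏ r ∈ Finset.Icc l d, xv K n (i r)) ''
        {i : ℕ → ℕ | (∑ s ∈ Finset.Icc 1 (l - 1), t s) + 1 ≤ i l ∧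
          (∀ p, l ≤ p → p ≤ d → i p ≤ j p) ∧
          (∀ p, l ≤ p → p + 1 ≤ d → i p + t p ≤ i (p + 1))}) :=
  stmt18_general K n d t j ht hj1 hjmono hjd hspread l hl1 hld hbelow
end
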